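/- Let (u, r, e) be a solution of the Yang monopole equations of motion on an open interval I, with associated position curve x : I → ℝ⁵∖{0} and vector L : I → ℝ⁵. Then for all t ∈ I, ⟨x(t), L(t)⟩ = (|e(t)|²/4) · |x(t)|; in particular, when L ≠ 0, the cosine of the angle between x(t) and L, namely ⟨x(t), L⟩/(|x(t)||L|) = |e|²/(4|L|), is constant, so x(I) lies on a cone with vertex at the origin directed along L. -/

import Mathlib

/-!
Read `ℝ⁴` as the quaternions and `e` as an imaginary quaternion. Then `Eop e w = w ē`,
`(‖u‖² + 1) • Aop u w = Im (ū w)` and `Bop b e = b × e`. The identities `‖x‖ = r` and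
`⟪x, L⟫ = ‖e‖² r / 4` are pointwise algebra. Along a solution, `ė = -2 (A u̇) × e` keeps `‖e‖²`
constant, and differentiating `L` with the help of the equation for `ü` gives `L̇ = 0`; the
quaternion identities behind the cancellation are `E(e)² = -‖e‖²` and
`E(Im (ū w) × e) w = -⟪Im (ū w), e⟫ w - ‖w‖² E(e) u + ⟪u, w⟫ E(e) w`. Hence the cosine
`‖e‖² / (4 ‖L‖)` is constant along the curve.
-/

open scoped InnerProductSpace

noncomputable section

/-- The 4×4 matrix `E` (built from the charge vector `e ∈ ℝ³`, with rows
`(0, e¹, e², e³)`, `(−e¹, 0, −e³, e²)`, `(−e², e³, 0, −e¹)`, `(−e³, −e², e¹, 0)`)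
applied to `w ∈ ℝ⁴`. -/
def Eop (e : EuclideanSpace ℝ (Fin 3)) (w : EuclideanSpace ℝ (Fin 4)) :
    EuclideanSpace ℝ (Fin 4) :=
  (WithLp.equiv 2 (Fin 4 → ℝ)).symm
    ![e 0 * w 1 + e 1 * w 2 + e 2 * w 3,
      -(e 0) * w 0 - e 2 * w 2 + e 1 * w 3,
      -(e 1) * w 0 + e 2 * w 1 - e 0 * w 3,
      -(e 2) * w 0 - e 1 * w 1 + e 0 * w 2]

/-- The 3×4 matrix `A` (with rows `A₁ = (−u₂, u₁, u₄, −u₃)/(|u|²+1)`,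
`A₂ = (−u₃, −u₄, u₁, u₂)/(|u|²+1)`, `A₃ = (−u₄, u₃, −u₂, u₁)/(|u|²+1)`) applied to
`w ∈ ℝ⁴`, giving `(⟨A₁, w⟩, ⟨A₂, w⟩, ⟨A₃, w⟩) ∈ ℝ³`. -/
def Aop (u w : EuclideanSpace ℝ (Fin 4)) : EuclideanSpace ℝ (Fin 3) :=
  (‖u‖ ^ 2 + 1)⁻¹ • (WithLp.equiv 2 (Fin 3 → ℝ)).symm
    ![-(u 1) * w 0 + u 0 * w 1 + u 3 * w 2 - u 2 * w 3,
      -(u 2) * w 0 - u 3 * w 1 + u 0 * w 2 + u 1 * w 3,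
      -(u 3) * w 0 + u 2 * w 1 - u 1 * w 2 + u 0 * w 3]

/-- The antisymmetric 3×3 matrix `B` (with rows `(0, −B₃, B₂)`, `(B₃, 0, −B₁)`,
`(−B₂, B₁, 0)`, built from `b = (B₁, B₂, B₃) = A u̇`) applied to `e ∈ ℝ³`. -/
def Bop (b e : EuclideanSpace ℝ (Fin 3)) : EuclideanSpace ℝ (Fin 3) :=
  (WithLp.equiv 2 (Fin 3 → ℝ)).symm
    ![-(b 2) * e 1 + b 1 * e 2,
      b 2 * e 0 - b 0 * e 2,
      -(b 1) * e 0 + b 0 * e 1]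

/-- `(u, r, e)` (with derivatives `u', u''`, `r', r''`, `e'`) is a solution of the Yang
monopole equations of motion on `I` (the Poincaré problem in `ℝ⁵`, in stereographic
coordinates): `u : I → ℝ⁴` and `r : I → (0, ∞)` are twice continuously differentiable,
`e : I → ℝ³` is continuously differentiable, and the three equations of motion hold. -/
def IsYangSolution (I : Set ℝ)
    (u u' u'' : ℝ → EuclideanSpace ℝ (Fin 4))
    (r r' r'' : ℝ → ℝ)
    (e e' : ℝ → EuclideanSpace ℝ (Fin 3)) : Prop :=
  (∀ t ∈ I, HasDerivAt u (u' t) t) ∧ (∀ t ∈ I, HasDerivAt u' (u'' t) t) ∧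
  ContinuousOn u'' I ∧
  (∀ t ∈ I, HasDerivAt r (r' t) t) ∧ (∀ t ∈ I, HasDerivAt r' (r'' t) t) ∧
  ContinuousOn r'' I ∧
  (∀ t ∈ I, HasDerivAt e (e' t) t) ∧ ContinuousOn e' I ∧
  (∀ t ∈ I, 0 < r t) ∧
  (∀ t ∈ I,
    u'' t + (2 * ‖u' t‖ ^ 2 / (‖u t‖ ^ 2 + 1)) • u t
        - (4 * ⟪u t, u' t⟫_ℝ / (‖u t‖ ^ 2 + 1)) • u' t
        + (2 * r' t / r t) • u' t
      = (1 / (2 * r t ^ 2)) • Eop (e t) (u' t)) ∧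
  (∀ t ∈ I, r'' t = 4 * r t * ‖u' t‖ ^ 2 / (‖u t‖ ^ 2 + 1) ^ 2) ∧
  (∀ t ∈ I, e' t = (-2 : ℝ) • Bop (Aop (u t) (u' t)) (e t))

/-- The associated position curve in `ℝ⁵ = ℝ⁴ × ℝ`:
`x = (2 r u/(|u|²+1), r (|u|²−1)/(|u|²+1))`. -/
def yangX (u : EuclideanSpace ℝ (Fin 4)) (r : ℝ) : EuclideanSpace ℝ (Fin 5) :=
  (WithLp.equiv 2 (Fin 5 → ℝ)).symm
    ![2 * r * u 0 / (‖u‖ ^ 2 + 1),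
      2 * r * u 1 / (‖u‖ ^ 2 + 1),
      2 * r * u 2 / (‖u‖ ^ 2 + 1),
      2 * r * u 3 / (‖u‖ ^ 2 + 1),
      r * (‖u‖ ^ 2 - 1) / (‖u‖ ^ 2 + 1)]

/-- The associated vector `L ∈ ℝ⁵ = ℝ⁴ × ℝ`:
`L = ( ((|e|² − 4r²⟨A u̇, e⟩) u + 2r² E u̇)/(2(|u|²+1)),
       2r²⟨A u̇, e⟩/(|u|²+1) + (|e|²/4)(|u|²−1)/(|u|²+1) )`. -/
def yangL (u u' : EuclideanSpace ℝ (Fin 4)) (r : ℝ) (e : EuclideanSpace ℝ (Fin 3)) :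
    EuclideanSpace ℝ (Fin 5) :=
  (WithLp.equiv 2 (Fin 5 → ℝ)).symm
    ![((‖e‖ ^ 2 - 4 * r ^ 2 * ⟪Aop u u', e⟫_ℝ) * u 0 + 2 * r ^ 2 * Eop e u' 0)
        / (2 * (‖u‖ ^ 2 + 1)),
      ((‖e‖ ^ 2 - 4 * r ^ 2 * ⟪Aop u u', e⟫_ℝ) * u 1 + 2 * r ^ 2 * Eop e u' 1)
        / (2 * (‖u‖ ^ 2 + 1)),
      ((‖e‖ ^ 2 - 4 * r ^ 2 * ⟪Aop u u', e⟫_ℝ) * u 2 + 2 * r ^ 2 * Eop e u' 2)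
        / (2 * (‖u‖ ^ 2 + 1)),
      ((‖e‖ ^ 2 - 4 * r ^ 2 * ⟪Aop u u', e⟫_ℝ) * u 3 + 2 * r ^ 2 * Eop e u' 3)
        / (2 * (‖u‖ ^ 2 + 1)),
      2 * r ^ 2 * ⟪Aop u u', e⟫_ℝ / (‖u‖ ^ 2 + 1)
        + (‖e‖ ^ 2 / 4) * (‖u‖ ^ 2 - 1) / (‖u‖ ^ 2 + 1)]

local notation "ℝ³" => EuclideanSpace ℝ (Fin 3)
local notation "ℝ⁴" => EuclideanSpace ℝ (Fin 4)

theorem IsBilinearMap.hasDerivAt_comp {E F G : Type*}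
    [NormedAddCommGroup E] [NormedSpace ℝ E] [FiniteDimensional ℝ E]
    [NormedAddCommGroup F] [NormedSpace ℝ F] [FiniteDimensional ℝ F]
    [NormedAddCommGroup G] [NormedSpace ℝ G]
    {f : E → F → G} (hf : IsBilinearMap ℝ f) {u : ℝ → E} {v : ℝ → F} {u' : E} {v' : F} {t : ℝ}
    (hu : HasDerivAt u u' t) (hv : HasDerivAt v v' t) :
    HasDerivAt (fun s => f (u s) (v s)) (f u' (v t) + f (u t) v') t := by
  rw [add_comm]
  exact hf.toContinuousBilinearMap.hasDerivAt_of_bilinear (fun _ => hu) (fun _ => hv)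

theorem Set.OrdConnected.eq_of_hasDerivAt_eq_zero {E : Type*} [NormedAddCommGroup E]
    [NormedSpace ℝ E] {I : Set ℝ} (hI : I.OrdConnected) {f : ℝ → E}
    (hf : ∀ t ∈ I, HasDerivAt f 0 t) {s t : ℝ} (hs : s ∈ I) (ht : t ∈ I) : f s = f t := by
  wlog hst : s ≤ t generalizing s t
  · exact (this ht hs (le_of_not_ge hst)).symm
  have hsub : Set.Icc s t ⊆ I := hI.out hs ht
  exact (constant_of_has_deriv_right_zero
    (fun x hx => (hf x (hsub hx)).continuousAt.continuousWithinAt)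
    (fun x hx => (hf x (hsub (Set.Ico_subset_Icc_self hx))).hasDerivWithinAt) t ⟨hst, le_rfl⟩).symm

/-- `Im (ū w)` for quaternions `u`, `w`. -/
def imConjMul (u w : ℝ⁴) : ℝ³ :=
  (WithLp.equiv 2 (Fin 3 → ℝ)).symm
    ![-(u 1) * w 0 + u 0 * w 1 + u 3 * w 2 - u 2 * w 3,
      -(u 2) * w 0 - u 3 * w 1 + u 0 * w 2 + u 1 * w 3,
      -(u 3) * w 0 + u 2 * w 1 - u 1 * w 2 + u 0 * w 3]

theorem Aop_eq_smul_imConjMul (u w : ℝ⁴) : Aop u w = (‖u‖ ^ 2 + 1)⁻¹ • imConjMul u w := rfl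

theorem isBilinearMap_imConjMul : IsBilinearMap ℝ imConjMul := by
  constructor <;> intros <;> ext i <;> fin_cases i <;> simp [imConjMul] <;> ring

theorem isBilinearMap_Eop : IsBilinearMap ℝ Eop := by
  constructor <;> intros <;> ext i <;> fin_cases i <;> simp [Eop] <;> ring

theorem isBilinearMap_Bop : IsBilinearMap ℝ Bop := by
  constructor <;> intros <;> ext i <;> fin_cases i <;> simp [Bop] <;> ring

theorem imConjMul_self (u : ℝ⁴) : imConjMul u u = 0 := by
  ext i; fin_cases i <;> simp [imConjMul] <;> ring

theorem inner_Bop_left (b e : ℝ³) : ⟪b, Bop b e⟫_ℝ = 0 := by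
  simp [Bop, PiLp.inner_apply, Fin.sum_univ_three]; ring

theorem inner_Bop_right (b e : ℝ³) : ⟪e, Bop b e⟫_ℝ = 0 := by
  simp [Bop, PiLp.inner_apply, Fin.sum_univ_three]; ring

theorem inner_imConjMul_Eop (u w : ℝ⁴) (e : ℝ³) :
    ⟪imConjMul u (Eop e w), e⟫_ℝ = -(⟪u, w⟫_ℝ * ‖e‖ ^ 2) := by
  simp [imConjMul, Eop, PiLp.inner_apply, Fin.sum_univ_three, Fin.sum_univ_four,
    EuclideanSpace.real_norm_sq_eq]; ring

theorem Eop_Eop (e : ℝ³) (w : ℝ⁴) : Eop e (Eop e w) = -(‖e‖ ^ 2) • w := by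
  ext i; fin_cases i <;> simp [Eop, EuclideanSpace.real_norm_sq_eq, Fin.sum_univ_three] <;> ring

theorem Eop_Bop_imConjMul (u w : ℝ⁴) (e : ℝ³) :
    Eop (Bop (imConjMul u w) e) w
      = -⟪imConjMul u w, e⟫_ℝ • w - ‖w‖ ^ 2 • Eop e u + ⟪u, w⟫_ℝ • Eop e w := by
  ext i; fin_cases i <;> simp [Eop, Bop, imConjMul, EuclideanSpace.real_norm_sq_eq,
    PiLp.inner_apply, Fin.sum_univ_three, Fin.sum_univ_four] <;> ring

theorem norm_yangX (u : ℝ⁴) (r : ℝ) : ‖yangX u r‖ = |r| := by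
  rw [← sq_eq_sq₀ (norm_nonneg _) (abs_nonneg _), sq_abs, EuclideanSpace.real_norm_sq_eq]
  have hu := EuclideanSpace.real_norm_sq_eq u
  have hQ : ‖u‖ ^ 2 + 1 ≠ 0 := by positivity
  simp only [Fin.sum_univ_four] at hu
  simp only [yangX, WithLp.equiv_symm_apply, Fin.sum_univ_five, Matrix.cons_val_zero,
    Matrix.cons_val_one, Matrix.cons_val]
  field_simp
  rw [hu]
  ring

theorem inner_yangX_yangL (u u' : ℝ⁴) (r : ℝ) (e : ℝ³) :
    ⟪yangX u r, yangL u u' r e⟫_ℝ = ‖e‖ ^ 2 / 4 * r := by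
  have hu := EuclideanSpace.real_norm_sq_eq u
  have hQ : ‖u‖ ^ 2 + 1 ≠ 0 := by positivity
  simp only [Fin.sum_univ_four] at hu
  simp only [yangX, yangL, Aop, Eop, WithLp.equiv_symm_apply, PiLp.inner_apply, PiLp.smul_apply,
    smul_eq_mul, RCLike.inner_apply, conj_trivial, Fin.sum_univ_three, Fin.sum_univ_five,
    Matrix.cons_val_zero, Matrix.cons_val_one, Matrix.cons_val]
  field_simp
  rw [hu]
  ring

def yangL₄ (u u' : ℝ⁴) (r : ℝ) (e : ℝ³) : ℝ⁴ :=
  (2 * (‖u‖ ^ 2 + 1))⁻¹ • ((‖e‖ ^ 2 - 4 * r ^ 2 * ⟪Aop u u', e⟫_ℝ) • u + (2 * r ^ 2) • Eop e u')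

theorem yangL_castSucc (u u' : ℝ⁴) (r : ℝ) (e : ℝ³) (i : Fin 4) :
    yangL u u' r e i.castSucc = yangL₄ u u' r e i := by
  fin_cases i <;> simp [yangL, yangL₄] <;> field_simp

theorem yangL_last (u u' : ℝ⁴) (r : ℝ) (e : ℝ³) :
    yangL u u' r e (Fin.last 4) = 2 * r ^ 2 * ⟪Aop u u', e⟫_ℝ / (‖u‖ ^ 2 + 1)
      + (‖e‖ ^ 2 / 4) * (‖u‖ ^ 2 - 1) / (‖u‖ ^ 2 + 1) := rfl

namespace IsYangSolution

variable {I : Set ℝ} {u u' u'' : ℝ → ℝ⁴} {r r' r'' : ℝ → ℝ} {e e' : ℝ → ℝ³} {t : ℝ}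

theorem hasDerivAt_u (hsol : IsYangSolution I u u' u'' r r' r'' e e') (ht : t ∈ I) :
    HasDerivAt u (u' t) t :=
  hsol.1 t ht

theorem hasDerivAt_u' (hsol : IsYangSolution I u u' u'' r r' r'' e e') (ht : t ∈ I) :
    HasDerivAt u' (u'' t) t :=
  hsol.2.1 t ht

theorem hasDerivAt_r (hsol : IsYangSolution I u u' u'' r r' r'' e e') (ht : t ∈ I) :
    HasDerivAt r (r' t) t :=
  hsol.2.2.2.1 t ht

theorem hasDerivAt_e (hsol : IsYangSolution I u u' u'' r r' r'' e e') (ht : t ∈ I) :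
    HasDerivAt e (e' t) t :=
  hsol.2.2.2.2.2.2.1 t ht

theorem r_pos (hsol : IsYangSolution I u u' u'' r r' r'' e e') (ht : t ∈ I) : 0 < r t :=
  hsol.2.2.2.2.2.2.2.2.1 t ht

theorem e'_eq (hsol : IsYangSolution I u u' u'' r r' r'' e e') (ht : t ∈ I) :
    e' t = (-2 : ℝ) • Bop (Aop (u t) (u' t)) (e t) :=
  hsol.2.2.2.2.2.2.2.2.2.2.2 t ht

theorem u''_eq (hsol : IsYangSolution I u u' u'' r r' r'' e e') (ht : t ∈ I) :
    u'' t = (1 / (2 * r t ^ 2)) • Eop (e t) (u' t)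
      + (-(2 * ‖u' t‖ ^ 2 / (‖u t‖ ^ 2 + 1))) • u t
      + (4 * ⟪u t, u' t⟫_ℝ / (‖u t‖ ^ 2 + 1) - 2 * r' t / r t) • u' t := by
  rw [← hsol.2.2.2.2.2.2.2.2.2.1 t ht]
  module

theorem hasDerivAt_norm_sq_e (hsol : IsYangSolution I u u' u'' r r' r'' e e') (ht : t ∈ I) :
    HasDerivAt (fun s => ‖e s‖ ^ 2) 0 t := by
  have h := (hsol.hasDerivAt_e ht).norm_sq
  rwa [hsol.e'_eq ht, inner_smul_right, inner_Bop_right, mul_zero, mul_zero] at h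

theorem hasDerivAt_norm_sq_u_add_one (hsol : IsYangSolution I u u' u'' r r' r'' e e')
    (ht : t ∈ I) : HasDerivAt (fun s => ‖u s‖ ^ 2 + 1) (2 * ⟪u t, u' t⟫_ℝ) t :=
  (hsol.hasDerivAt_u ht).norm_sq.add_const 1

theorem hasDerivAt_inner_Aop (hsol : IsYangSolution I u u' u'' r r' r'' e e') (ht : t ∈ I) :
    HasDerivAt (fun s => ⟪Aop (u s) (u' s), e s⟫_ℝ)
      ((2 * ⟪u t, u' t⟫_ℝ / (‖u t‖ ^ 2 + 1) - 2 * r' t / r t) * ⟪Aop (u t) (u' t), e t⟫_ℝ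
        - ⟪u t, u' t⟫_ℝ * ‖e t‖ ^ 2 / (2 * r t ^ 2 * (‖u t‖ ^ 2 + 1))) t := by
  have hQ : ‖u t‖ ^ 2 + 1 ≠ 0 := by positivity
  have hr : r t ≠ 0 := (hsol.r_pos ht).ne'
  have hA := ((hsol.hasDerivAt_norm_sq_u_add_one ht).fun_inv hQ).fun_smul
    (isBilinearMap_imConjMul.hasDerivAt_comp (hsol.hasDerivAt_u ht) (hsol.hasDerivAt_u' ht))
  have h := hA.inner ℝ (hsol.hasDerivAt_e ht)
  simp only [← Aop_eq_smul_imConjMul] at h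
  refine h.congr_deriv ?_
  rw [hsol.e'_eq ht, inner_smul_right, inner_Bop_left, hsol.u''_eq ht]
  simp only [isBilinearMap_imConjMul.add_right, isBilinearMap_imConjMul.smul_right,
    imConjMul_self, smul_zero, zero_add, add_zero, inner_add_left, inner_smul_left,
    inner_imConjMul_Eop, Aop_eq_smul_imConjMul, RCLike.conj_to_real]
  field_simp
  ring

theorem hasDerivAt_yangL₄ (hsol : IsYangSolution I u u' u'' r r' r'' e e') (ht : t ∈ I) :
    HasDerivAt (fun s => yangL₄ (u s) (u' s) (r s) (e s)) 0 t := by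
  have hQ : ‖u t‖ ^ 2 + 1 ≠ 0 := by positivity
  have hr : r t ≠ 0 := (hsol.r_pos ht).ne'
  have hr2 := (hsol.hasDerivAt_r ht).fun_pow 2
  have hK := (hsol.hasDerivAt_norm_sq_e ht).fun_sub
    ((hr2.const_mul 4).fun_mul (hsol.hasDerivAt_inner_Aop ht))
  have hE := isBilinearMap_Eop.hasDerivAt_comp (hsol.hasDerivAt_e ht) (hsol.hasDerivAt_u' ht)
  have h := (((hsol.hasDerivAt_norm_sq_u_add_one ht).const_mul 2).fun_inv (by positivity)).fun_smul
    ((hK.fun_smul (hsol.hasDerivAt_u ht)).fun_add ((hr2.const_mul 2).fun_smul hE))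
  refine h.congr_deriv ?_
  rw [hsol.e'_eq ht, hsol.u''_eq ht, Aop_eq_smul_imConjMul]
  simp only [isBilinearMap_Eop.add_right, isBilinearMap_Eop.smul_right,
    isBilinearMap_Eop.smul_left, isBilinearMap_Bop.smul_left, Eop_Eop, Eop_Bop_imConjMul,
    inner_smul_left, RCLike.conj_to_real]
  match_scalars <;> field_simp <;> ring

theorem hasDerivAt_yangL_last (hsol : IsYangSolution I u u' u'' r r' r'' e e') (ht : t ∈ I) :
    HasDerivAt (fun s => yangL (u s) (u' s) (r s) (e s) (Fin.last 4)) 0 t := by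
  have hQ : ‖u t‖ ^ 2 + 1 ≠ 0 := by positivity
  have hr : r t ≠ 0 := (hsol.r_pos ht).ne'
  have hQ' := hsol.hasDerivAt_norm_sq_u_add_one ht
  have h := ((((hsol.hasDerivAt_r ht).fun_pow 2).const_mul 2).fun_mul
      (hsol.hasDerivAt_inner_Aop ht)).fun_div hQ' hQ
    |>.fun_add ((((hsol.hasDerivAt_norm_sq_e ht).div_const 4).fun_mul
      ((hsol.hasDerivAt_u ht).norm_sq.sub_const 1)).fun_div hQ' hQ)
  simp only [yangL_last]
  refine h.congr_deriv ?_
  field_simp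
  ring

theorem hasDerivAt_yangL (hsol : IsYangSolution I u u' u'' r r' r'' e e') (ht : t ∈ I) :
    HasDerivAt (fun s => WithLp.ofLp (yangL (u s) (u' s) (r s) (e s))) 0 t := by
  refine hasDerivAt_pi.2 fun i => ?_
  induction i using Fin.lastCases with
  | last => exact hsol.hasDerivAt_yangL_last ht
  | cast j =>
    simp only [yangL_castSucc]
    have h := (PiLp.hasFDerivAt_apply 2 _ j).comp_hasDerivAt t (hsol.hasDerivAt_yangL₄ ht)
    rwa [map_zero] at h

end IsYangSolution

theorem yang_inner_x_L_general
    (I : Set ℝ) (hIconn : I.OrdConnected)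
    (u u' u'' : ℝ → EuclideanSpace ℝ (Fin 4))
    (r r' r'' : ℝ → ℝ)
    (e e' : ℝ → EuclideanSpace ℝ (Fin 3))
    (hsol : IsYangSolution I u u' u'' r r' r'' e e')
    (x L : ℝ → EuclideanSpace ℝ (Fin 5))
    (hx : ∀ t, x t = yangX (u t) (r t))
    (hL : ∀ t, L t = yangL (u t) (u' t) (r t) (e t)) :
    (∀ t ∈ I, ⟪x t, L t⟫_ℝ = (‖e t‖ ^ 2 / 4) * ‖x t‖) ∧
      ((∀ t ∈ I, L t ≠ 0) →
        ∀ s ∈ I, ∀ t ∈ I,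
          ⟪x s, L s⟫_ℝ / (‖x s‖ * ‖L s‖) = ⟪x t, L t⟫_ℝ / (‖x t‖ * ‖L t‖) ∧
          ⟪x t, L t⟫_ℝ / (‖x t‖ * ‖L t‖) = ‖e t‖ ^ 2 / (4 * ‖L t‖)) := by
  have hnorm_x : ∀ t ∈ I, ‖x t‖ = r t := fun t ht => by
    rw [hx, norm_yangX, abs_of_pos (hsol.r_pos ht)]
  have hinner : ∀ t ∈ I, ⟪x t, L t⟫_ℝ = (‖e t‖ ^ 2 / 4) * ‖x t‖ := fun t ht => by
    rw [hnorm_x t ht, hx, hL, inner_yangX_yangL]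
  have hcos : ∀ t ∈ I, ⟪x t, L t⟫_ℝ / (‖x t‖ * ‖L t‖) = ‖e t‖ ^ 2 / (4 * ‖L t‖) := fun t ht => by
    have hx0 : ‖x t‖ ≠ 0 := (hnorm_x t ht).symm ▸ (hsol.r_pos ht).ne'
    rw [hinner t ht]
    field_simp
  refine ⟨hinner, fun _ s hs t ht => ⟨?_, hcos t ht⟩⟩
  have hL_const : L s = L t := by
    simp only [hL]
    exact WithLp.ofLp_injective 2
      (hIconn.eq_of_hasDerivAt_eq_zero (fun _ ht => hsol.hasDerivAt_yangL ht) hs ht)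
  have he_const : ‖e s‖ ^ 2 = ‖e t‖ ^ 2 :=
    hIconn.eq_of_hasDerivAt_eq_zero (fun _ ht => hsol.hasDerivAt_norm_sq_e ht) hs ht
  rw [hcos s hs, hcos t ht, he_const, hL_const]

/-- For a solution `(u, r, e)` of the Yang monopole equations of motion
on an open interval `I`, with position curve `x` and vector `L`, one has
`⟨x(t), L(t)⟩ = (|e(t)|²/4)·|x(t)|` for all `t ∈ I`; in particular, when `L` is nowhere
zero on `I`, the cosine of the angle between `x(t)` and `L`, namely
`⟨x(t), L(t)⟩/(|x(t)||L(t)|) = |e|²/(4|L|)`, is constant on `I`, so `x(I)` lies on a cone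
with vertex at the origin directed along `L`. -/
theorem yang_inner_x_L
    (I : Set ℝ) (hIopen : IsOpen I) (hIconn : I.OrdConnected)
    (u u' u'' : ℝ → EuclideanSpace ℝ (Fin 4))
    (r r' r'' : ℝ → ℝ)
    (e e' : ℝ → EuclideanSpace ℝ (Fin 3))
    (hsol : IsYangSolution I u u' u'' r r' r'' e e')
    (x L : ℝ → EuclideanSpace ℝ (Fin 5))
    (hx : ∀ t, x t = yangX (u t) (r t))
    (hL : ∀ t, L t = yangL (u t) (u' t) (r t) (e t)) :
    (∀ t ∈ I, ⟪x t, L t⟫_ℝ = (‖e t‖ ^ 2 / 4) * ‖x t‖) ∧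
      ((∀ t ∈ I, L t ≠ 0) →
        ∀ s ∈ I, ∀ t ∈ I,
          ⟪x s, L s⟫_ℝ / (‖x s‖ * ‖L s‖) = ⟪x t, L t⟫_ℝ / (‖x t‖ * ‖L t‖) ∧
          ⟪x t, L t⟫_ℝ / (‖x t‖ * ‖L t‖) = ‖e t‖ ^ 2 / (4 * ‖L t‖)) :=
  yang_inner_x_L_general I hIconn u u' u'' r r' r'' e e' hsol x L hx hL

end
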